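/- Let n ∈ ℝ³ be a unit vector. For every three-times continuously differentiable symmetric matrix field τ : ℝ³ → 𝕊, one has pointwise on ℝ³: (n·(inc τ))×n = ∇_F^⊥ · tr₂(τ), as an identity of vector fields. -/

import Mathlib

open Matrix

noncomputable section

abbrev V3 : Type := Fin 3 → ℝ
abbrev M3 : Type := Matrix (Fin 3) (Fin 3) ℝ

/-- The Levi-Civita symbol `ε i j k` on `Fin 3`. -/
def eps (i j k : Fin 3) : ℝ :=
  ((((j : ℤ) - (i : ℤ)) * ((k : ℤ) - (j : ℤ)) * ((k : ℤ) - (i : ℤ)) : ℤ) : ℝ) / 2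

/-- Partial derivative `∂ᵢ f`. -/
def pd (i : Fin 3) (f : V3 → ℝ) : V3 → ℝ :=
  fun x => fderiv ℝ f x (Pi.single i 1)

/-- Cross product of vectors in `ℝ³`. -/
def vcross (a b : V3) : V3 := fun i => ∑ k, ∑ l, eps i k l * a k * b l

/-- Symmetric part of a matrix, `sym B = (B + Bᵀ)/2`. -/
def symMat (B : M3) : M3 := (2:ℝ)⁻¹ • (B + Bᵀ)

/-- `(∇v)_{ij} = ∂ᵢ v_j`. -/
def gradv (v : V3 → V3) : V3 → M3 :=
  fun x => Matrix.of fun i j => pd i (fun y => v y j) x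

/-- Symmetric gradient (deformation) `def v = (∇v + (∇v)ᵀ)/2`. -/
def defv (v : V3 → V3) : V3 → M3 := fun x => symMat (gradv v x)

/-- Column-wise curl `(∇×A)_{ij} = Σ_{s,t} ε_{ist} ∂_s A_{tj}`. -/
def colCurl (A : V3 → M3) : V3 → M3 :=
  fun x => Matrix.of fun i j => ∑ s, ∑ t, eps i s t * pd s (fun y => A y t j) x

/-- Row-wise curl `(A×∇)_{ij} = Σ_{k,l} ε_{jkl} ∂_l A_{ik}`. -/
def rowCurl (A : V3 → M3) : V3 → M3 :=
  fun x => Matrix.of fun i j => ∑ k, ∑ l, eps j k l * pd l (fun y => A y i k) x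

/-- Incompatibility operator `inc A = ∇×(A×∇)`. -/
def incOp (A : V3 → M3) : V3 → M3 := colCurl (rowCurl A)

/-- Row-wise divergence `(div A)_i = Σ_j ∂_j A_{ij}`. -/
def divRow (A : V3 → M3) : V3 → V3 :=
  fun x i => ∑ j, pd j (fun y => A y i j) x

/-- Curl of a vector field. -/
def curlVec (w : V3 → V3) : V3 → V3 :=
  fun x i => ∑ s, ∑ t, eps i s t * pd s (fun y => w y t) x

/-- `(b×A)_{ij} = Σ_{k,l} ε_{ikl} b_k A_{lj}`. -/
def bCrossA (b : V3) (A : M3) : M3 :=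
  Matrix.of fun i j => ∑ k, ∑ l, eps i k l * b k * A l j

/-- `(A×b)_{ij} = Σ_{k,l} ε_{jkl} A_{ik} b_l`. -/
def aCrossB (A : M3) (b : V3) : M3 :=
  Matrix.of fun i j => ∑ k, ∑ l, eps j k l * A i k * b l

/-- `f : ℝ³ → ℝ` is a polynomial map of total degree at most `m` (`m : ℤ`, so
`m < 0` forces `f = 0` since the zero polynomial has empty support). -/
def PolyDeg (m : ℤ) (f : V3 → ℝ) : Prop :=
  ∃ p : MvPolynomial (Fin 3) ℝ,
    (∀ d ∈ p.support, ((∑ i, d i : ℕ) : ℤ) ≤ m) ∧ f = fun x => MvPolynomial.eval x p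

/-- `P_m(ℝ³;ℝ³)`. -/
def PolyVec (m : ℤ) (v : V3 → V3) : Prop := ∀ i, PolyDeg m fun x => v x i

/-- `P_m(ℝ³;𝕄)`. -/
def PolyMat (m : ℤ) (A : V3 → M3) : Prop := ∀ i j, PolyDeg m fun x => A x i j

/-- `P_m(ℝ³;𝕊)`: polynomial symmetric-matrix-valued maps of degree at most `m`. -/
def PolySym (m : ℤ) (A : V3 → M3) : Prop := PolyMat m A ∧ ∀ x, (A x)ᵀ = A x

/-- The tangential projection matrix `Π_F = I - n nᵀ`. -/
def PF (n : V3) : M3 := 1 - Matrix.vecMulVec n n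

/-- Tangential derivative `(∇_F)_i f = Σ_k (Π_F)_{ik} ∂_k f`. -/
def dF (n : V3) (i : Fin 3) (f : V3 → ℝ) : V3 → ℝ :=
  fun x => ∑ k, PF n i k * pd k f x

/-- `(∇_F^⊥)_i f = Σ_{k,l} ε_{ikl} n_k ∂_l f`. -/
def dFperp (n : V3) (i : Fin 3) (f : V3 → ℝ) : V3 → ℝ :=
  fun x => ∑ k, ∑ l, eps i k l * n k * pd l f x

/-- `(∇_F w)_{ij} = (∇_F)_i w_j`. -/
def gradF (n : V3) (w : V3 → V3) : V3 → M3 :=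
  fun x => Matrix.of fun i j => dF n i (fun y => w y j) x

/-- First trace for the `inc` operator: `tr₁(τ) = n×τ×n`. -/
def tr1 (n : V3) (τ : V3 → M3) : V3 → M3 :=
  fun x => bCrossA n (aCrossB (τ x) n)

/-- Second trace for the `inc` operator:
`tr₂(τ) = sym( n×(∇×τ)·Π_F + ∇_F(n·τ·Π_F) )`. -/
def tr2 (n : V3) (τ : V3 → M3) : V3 → M3 :=
  fun x => symMat (bCrossA n (colCurl τ x) * PF n
    + gradF n (fun y => Matrix.vecMul (Matrix.vecMul n (τ y)) (PF n)) x)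

/-! Every operator in the identity has constant coefficients, so at a point `x` both sides are
linear in the second derivatives `∂ₐ∂_b τᵢⱼ(x)`: the left side through `inc`, the right side
because `∂_l` commutes with `tr₂`. These second derivatives are symmetric in `(a, b)` (Schwarz)
and in `(i, j)` (`τ` is symmetric), and for such arrays the identity is a polynomial identity
in `n` and the 36 independent entries, checked componentwise. -/

section PartialDerivative

variable {f g : V3 → ℝ} {a b : Fin 3} {x : V3}

lemma pd_add (hf : DifferentiableAt ℝ f x) (hg : DifferentiableAt ℝ g x) :
    pd a (fun y => f y + g y) x = pd a f x + pd a g x := by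
  simp [pd, fderiv_fun_add hf hg]

lemma pd_const_mul (c : ℝ) (hf : DifferentiableAt ℝ f x) :
    pd a (fun y => c * f y) x = c * pd a f x := by
  simp [pd, fderiv_const_mul hf c]

lemma pd_mul_const (c : ℝ) (hf : DifferentiableAt ℝ f x) :
    pd a (fun y => f y * c) x = pd a f x * c := by
  simpa only [mul_comm] using pd_const_mul c hf

lemma pd_sum {ι : Type*} (s : Finset ι) {F : ι → V3 → ℝ}
    (hF : ∀ i ∈ s, DifferentiableAt ℝ (F i) x) :
    pd a (fun y => ∑ i ∈ s, F i y) x = ∑ i ∈ s, pd a (F i) x := by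
  simp [pd, fderiv_fun_sum hF]

lemma differentiable_pd (hf : ContDiff ℝ 2 f) : Differentiable ℝ (pd a f) :=
  ((hf.fderiv_right (m := 1) le_rfl).differentiable one_ne_zero).clm_apply
    (differentiable_const _)

lemma pd_comm (hf : ContDiff ℝ 2 f) :
    pd a (pd b f) x = pd b (pd a f) x := by
  have hsymm : IsSymmSndFDerivAt ℝ f x :=
    hf.contDiffAt.isSymmSndFDerivAt (by simp [minSmoothness_of_isRCLikeNormedField])
  have hdf : DifferentiableAt ℝ (fderiv ℝ f) x :=
    (hf.fderiv_right (m := 1) le_rfl).differentiable one_ne_zero x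
  have hpd : ∀ v w : V3, fderiv ℝ (fun y => fderiv ℝ f y v) x w = fderiv ℝ (fderiv ℝ f) x w v := by
    intro v w
    simp [fderiv_clm_apply hdf (differentiableAt_const v)]
  unfold pd
  rw [hpd, hpd, hsymm]

end PartialDerivative

def pdMat (a : Fin 3) (σ : V3 → M3) : V3 → M3 :=
  fun y => of fun i j => pd a (fun z => σ z i j) y

lemma pdMat_transpose (a : Fin 3) (σ : V3 → M3) (y : V3) :
    (pdMat a σ y)ᵀ = pdMat a (fun z => (σ z)ᵀ) y :=
  rfl

/- Jet forms of the operators: `G a` stands for `∂ₐσ(x)` and `D a b` for `∂ₐ∂_bσ(x)`. -/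
def curlJet (G : Fin 3 → M3) : M3 :=
  of fun i j => ∑ s, ∑ t, eps i s t * G s t j

def tr2Jet (n : V3) (G : Fin 3 → M3) : M3 :=
  symMat (bCrossA n (curlJet G) * PF n
    + of fun i j => ∑ k, PF n i k * vecMul (vecMul n (G k)) (PF n) j)

def incJet (D : Fin 3 → Fin 3 → M3) : M3 :=
  of fun i j => ∑ s, ∑ t, ∑ k, ∑ l, eps i s t * eps j k l * D s l t k

section Jets

variable {n x : V3} {σ : V3 → M3}

lemma tr2_eq_tr2Jet (hσ : ∀ i j, DifferentiableAt ℝ (fun y => σ y i j) x) :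
    tr2 n σ x = tr2Jet n (fun a => pdMat a σ x) := by
  ext i j
  simp only [tr2, tr2Jet, curlJet, colCurl, gradF, dF, pdMat, vecMul, dotProduct, symMat,
    Matrix.smul_apply, Matrix.add_apply, Matrix.transpose_apply, of_apply]
  simp (disch := fun_prop) only [pd_sum, pd_const_mul, pd_mul_const]

lemma pd_tr2Jet {G : V3 → Fin 3 → M3} (hG : ∀ a i j, DifferentiableAt ℝ (fun y => G y a i j) x)
    (l i j : Fin 3) :
    pd l (fun y => tr2Jet n (G y) i j) x = tr2Jet n (fun a => pdMat l (fun y => G y a) x) i j := by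
  simp only [tr2Jet, curlJet, bCrossA, pdMat, vecMul, dotProduct, symMat, Matrix.mul_apply,
    Matrix.smul_apply, Matrix.add_apply, Matrix.transpose_apply, of_apply, smul_eq_mul]
  simp (disch := fun_prop) only [pd_sum, pd_const_mul, pd_mul_const, pd_add]

lemma pd_tr2 (hσ : ∀ i j, ContDiff ℝ 2 fun y => σ y i j) (l i j : Fin 3) :
    pd l (fun y => tr2 n σ y i j) x = tr2Jet n (fun a => pdMat l (pdMat a σ) x) i j := by
  have hσ' : ∀ i j, Differentiable ℝ fun y => σ y i j :=
    fun i j => (hσ i j).differentiable two_ne_zero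
  simp_rw [tr2_eq_tr2Jet fun i j => (hσ' i j).differentiableAt]
  exact pd_tr2Jet (fun a i j => (differentiable_pd (hσ i j)).differentiableAt) l i j

lemma incOp_eq_incJet (hσ : ∀ i j, ContDiff ℝ 2 fun y => σ y i j) :
    incOp σ x = incJet (fun a b => pdMat a (pdMat b σ) x) := by
  have hσ' : ∀ a i j, Differentiable ℝ (pd a fun y => σ y i j) :=
    fun a i j => differentiable_pd (hσ i j)
  ext i j
  simp only [incOp, incJet, colCurl, rowCurl, pdMat, of_apply]
  simp (disch := fun_prop) only [pd_sum, pd_const_mul]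
  simp only [Finset.mul_sum, mul_assoc]

end Jets

set_option maxHeartbeats 1000000 in
lemma vcross_vecMul_incJet_eq_sum_tr2Jet (n : V3) (D : Fin 3 → Fin 3 → M3)
    (hD : ∀ a b, D a b = D b a) (hDT : ∀ a b, (D a b)ᵀ = D a b) :
    vcross (vecMul n (incJet D)) n
      = fun j => ∑ i, ∑ k, ∑ l, eps i k l * n k * tr2Jet n (D l) i j := by
  have hDT' : ∀ a b i j, D a b i j = D a b j i := fun a b i j => by
    rw [← transpose_apply (D a b) j i, hDT]
  funext j
  fin_cases j <;>
  · simp [vcross, vecMul, dotProduct, incJet, tr2Jet, curlJet, symMat, bCrossA, PF,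
      Matrix.mul_apply, Matrix.one_apply, vecMulVec_apply, Fin.sum_univ_three, eps,
      hD 1 0, hD 2 0, hD 2 1, hDT' _ _ 1 0, hDT' _ _ 2 0, hDT' _ _ 2 1]
    ring

theorem stmt_16_general (n : V3)
    (τ : V3 → M3) (hτsym : ∀ x, (τ x)ᵀ = τ x)
    (hτ : ∀ i j, ContDiff ℝ 3 fun x => τ x i j) :
    ∀ x, vcross (Matrix.vecMul n (incOp τ x)) n
      = fun j => ∑ i, dFperp n i (fun y => tr2 n τ y i j) x := by
  have hτ2 : ∀ i j, ContDiff ℝ 2 fun x => τ x i j := fun i j => (hτ i j).of_le (by norm_num)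
  intro x
  have hcomm : ∀ a b, pdMat a (pdMat b τ) x = pdMat b (pdMat a τ) x := fun a b => by
    ext i j
    exact pd_comm (hτ2 i j)
  have hsymm : ∀ a b, (pdMat a (pdMat b τ) x)ᵀ = pdMat a (pdMat b τ) x := fun a b => by
    simp only [pdMat_transpose, hτsym]
  rw [incOp_eq_incJet hτ2, vcross_vecMul_incJet_eq_sum_tr2Jet n _ hcomm hsymm]
  funext j
  simp only [dFperp, pd_tr2 hτ2]

/-- `(n·(inc τ))×n = ∇_F^⊥ · tr₂(τ)` as vector fields. -/
theorem stmt_16 (n : V3) (hn : ∑ i, n i * n i = 1)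
    (τ : V3 → M3) (hτsym : ∀ x, (τ x)ᵀ = τ x)
    (hτ : ∀ i j, ContDiff ℝ 3 fun x => τ x i j) :
    ∀ x, vcross (Matrix.vecMul n (incOp τ x)) n
      = fun j => ∑ i, dFperp n i (fun y => tr2 n τ y i j) x :=
  stmt_16_general n τ hτsym hτ
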